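/- The Bernoulli numbers of the second kind b_n, defined by t/log(1+t) = Σ_{n≥0} b_n t^n/n!, satisfy for n ≥ 1: b_n = Σ_{i=0}^{n} ((-1)^i/(i+1)) (S_1(n,i) + n·S_1(n-1,i)), with the convention S_1(n-1,n) = 0. -/

import Mathlib

/-- The formal power series `log(1+t) = Σ_{n≥1} (-1)^{n+1} t^n/n`. -/
noncomputable def logSeries : PowerSeries ℝ :=
  PowerSeries.mk fun n => if n = 0 then 0 else (-1 : ℝ) ^ (n + 1) / n

/-- The signed Stirling numbers of the first kind, defined by
`(x)_m = Σ_k S_1(m,k) x^k` (so in particular `S_1(n-1,n) = 0`). -/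
noncomputable def stirling1 (m k : ℕ) : ℝ :=
  (descPochhammer ℝ m).coeff k

open PowerSeries Finset

lemma coeff_logSeries (n : ℕ) :
    (PowerSeries.coeff (R := ℝ) n) logSeries = if n = 0 then 0 else (-1 : ℝ) ^ (n + 1) / n :=
  coeff_mk n _

lemma logSeries_deriv : (1 + PowerSeries.X) * (PowerSeries.derivative ℝ logSeries) = 1 := by
  ext n
  rw [add_mul, one_mul, map_add, coeff_one, PowerSeries.coeff_derivative, coeff_logSeries]
  cases n with
  | zero => simp
  | succ m =>
    rw [coeff_succ_X_mul, PowerSeries.coeff_derivative, coeff_logSeries]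
    have h1 : ((m : ℝ) + 1) ≠ 0 := by positivity
    have h2 : ((m : ℝ) + 1 + 1) ≠ 0 := by positivity
    simp only [Nat.succ_ne_zero, if_false, Nat.cast_succ, Nat.cast_add, Nat.cast_one]
    field_simp
    ring

lemma key (j n : ℕ) :
    ((n : ℝ) + 1) * (PowerSeries.coeff (R := ℝ) (n + 1)) (logSeries ^ (j + 1))
      + n * (PowerSeries.coeff (R := ℝ) n) (logSeries ^ (j + 1))
    = ((j : ℝ) + 1) * (PowerSeries.coeff (R := ℝ) n) (logSeries ^ j) := by
  have hD : (1 + PowerSeries.X) * (PowerSeries.derivative ℝ) (logSeries ^ (j + 1))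
      = (j + 1 : ℕ) • (logSeries ^ j) := by
    calc (1 + PowerSeries.X) * (PowerSeries.derivative ℝ) (logSeries ^ (j + 1))
        = (j + 1 : ℕ) • (logSeries ^ j * ((1 + PowerSeries.X)
            * (PowerSeries.derivative ℝ) logSeries)) := by
          rw [Derivation.leibniz_pow]
          simp only [smul_eq_mul, Nat.add_sub_cancel, nsmul_eq_mul]
          push_cast
          ring
      _ = (j + 1 : ℕ) • logSeries ^ j := by rw [logSeries_deriv, mul_one]
  have h := congrArg (PowerSeries.coeff (R := ℝ) n) hD
  rw [add_mul, one_mul, map_add, map_nsmul, PowerSeries.coeff_derivative] at h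
  rw [nsmul_eq_mul] at h
  push_cast at h
  rw [← h]
  cases n with
  | zero => simp [coeff_zero_X_mul]
  | succ m =>
    rw [coeff_succ_X_mul, PowerSeries.coeff_derivative]
    push_cast
    ring

lemma coeff_logSeries_pow_eq_zero {n j : ℕ} (h : n < j) :
    (PowerSeries.coeff (R := ℝ) n) (logSeries ^ j) = 0 := by
  have hX : (PowerSeries.X : PowerSeries ℝ) ∣ logSeries := by
    rw [PowerSeries.X_dvd_iff]
    simp [logSeries, constantCoeff_mk]
  obtain ⟨g, hg⟩ := hX
  rw [hg, mul_pow, PowerSeries.coeff_X_pow_mul']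
  simp [Nat.not_le_of_lt h]

lemma stirling1_rec (n j : ℕ) :
    stirling1 (n + 1) (j + 1) = stirling1 n j - n * stirling1 n (j + 1) := by
  unfold stirling1
  rw [descPochhammer_succ_right]
  have : (n : Polynomial ℝ) = Polynomial.C (n : ℝ) := by simp [Polynomial.C_eq_natCast]
  rw [this, mul_sub, Polynomial.coeff_sub, Polynomial.coeff_mul_X, Polynomial.coeff_mul_C]
  ring

lemma stirling1_zero (j : ℕ) : stirling1 0 j = if j = 0 then 1 else 0 := by
  unfold stirling1
  simp [descPochhammer, Polynomial.coeff_one]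

lemma stirling1_succ_zero (n : ℕ) : stirling1 (n + 1) 0 = 0 := by
  unfold stirling1
  rw [Polynomial.coeff_zero_eq_eval_zero, descPochhammer_eval_zero]
  simp

lemma coeff_pow_stirling : ∀ n j : ℕ, (PowerSeries.coeff (R := ℝ) n) (logSeries ^ j)
    = (j.factorial : ℝ) * stirling1 n j / n.factorial := by
  intro n
  induction n with
  | zero =>
    intro j
    rw [PowerSeries.coeff_zero_eq_constantCoeff_apply, map_pow, stirling1_zero]
    have : PowerSeries.constantCoeff (R := ℝ) logSeries = 0 := by simp [logSeries, constantCoeff_mk]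
    rw [this]
    cases j with
    | zero => simp
    | succ m => simp [Nat.succ_ne_zero]
  | succ m ih =>
    intro j
    cases j with
    | zero =>
      simp [stirling1_succ_zero, PowerSeries.coeff_one, Nat.succ_ne_zero]
    | succ i =>
      have hk := key i m
      rw [ih i, ih (i + 1), stirling1_rec m i] at *
      have hm1 : ((m : ℝ) + 1) ≠ 0 := by positivity
      have hmf : ((m.factorial : ℝ)) ≠ 0 := by positivity
      have hm1f : (((m + 1).factorial : ℝ)) ≠ 0 := by positivity
      have hfs : ((m + 1).factorial : ℝ) = (m + 1) * m.factorial := by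
        rw [Nat.factorial_succ]; push_cast; ring
      have his : ((i + 1).factorial : ℝ) = (i + 1) * i.factorial := by
        rw [Nat.factorial_succ]; push_cast; ring
      -- solve for coeff (m+1) (logSeries ^ (i+1)) from hk
      have : (PowerSeries.coeff (R := ℝ) (m + 1)) (logSeries ^ (i + 1))
          = (((i : ℝ) + 1) * ((i.factorial : ℝ) * stirling1 m i / m.factorial)
            - m * ((i + 1).factorial * stirling1 m (i + 1) / m.factorial)) / (m + 1) := by
        push_cast at hk ⊢
        field_simp at hk ⊢
        linarith [hk]
      rw [this, hfs, his]
      push_cast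
      field_simp

noncomputable def eSeq (m : ℕ) : ℝ :=
  ∑ j ∈ Finset.range (m + 1), (PowerSeries.coeff (R := ℝ) m) (logSeries ^ j) / j.factorial

lemma sumT (m : ℕ) :
    ∑ i ∈ Finset.range (m + 1),
        (PowerSeries.coeff (R := ℝ) m) (logSeries ^ (i + 1)) / (i + 1).factorial
      = eSeq m - (if m = 0 then 1 else 0) := by
  have h := Finset.sum_range_succ'
    (fun j => (PowerSeries.coeff (R := ℝ) m) (logSeries ^ j) / j.factorial) (m + 1)
  rw [Finset.sum_range_succ] at h
  have h1 : (PowerSeries.coeff (R := ℝ) m) (logSeries ^ (m + 1)) = 0 :=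
    coeff_logSeries_pow_eq_zero (Nat.lt_succ_self m)
  have h2 : (PowerSeries.coeff (R := ℝ) m) (logSeries ^ 0) / (0).factorial
      = if m = 0 then 1 else 0 := by
    simp [PowerSeries.coeff_one]
  simp only [h1, zero_div, add_zero] at h
  rw [show (∑ j ∈ Finset.range (m + 1),
      (PowerSeries.coeff (R := ℝ) m) (logSeries ^ j) / j.factorial) = eSeq m from rfl] at h
  rw [h, h2]
  ring

lemma eSeq_rec (m : ℕ) : ((m : ℝ) + 1) * eSeq (m + 1) = (1 - m) * eSeq m := by
  unfold eSeq
  rw [Finset.mul_sum]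
  rw [Finset.sum_range_succ'
    (fun j => ((m : ℝ) + 1) * ((PowerSeries.coeff (R := ℝ) (m + 1)) (logSeries ^ j) / j.factorial))]
  have h0 : ((m : ℝ) + 1) * ((PowerSeries.coeff (R := ℝ) (m + 1)) (logSeries ^ 0) / (0).factorial)
      = 0 := by
    simp [PowerSeries.coeff_one]
  rw [h0, add_zero]
  have hterm : ∀ i ∈ Finset.range (m + 1),
      ((m : ℝ) + 1) * ((PowerSeries.coeff (R := ℝ) (m + 1)) (logSeries ^ (i + 1)) / (i + 1).factorial)
      = (PowerSeries.coeff (R := ℝ) m) (logSeries ^ i) / i.factorial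
        - (m : ℝ) * ((PowerSeries.coeff (R := ℝ) m) (logSeries ^ (i + 1)) / (i + 1).factorial) := by
    intro i _
    have hk := key i m
    have his : (((i + 1).factorial : ℝ)) = (i + 1) * i.factorial := by
      rw [Nat.factorial_succ]; push_cast; ring
    have hif : ((i.factorial : ℝ)) ≠ 0 := by positivity
    have hi1 : ((i : ℝ) + 1) ≠ 0 := by positivity
    rw [his]
    field_simp
    linear_combination hk
  rw [Finset.sum_congr rfl hterm, Finset.sum_sub_distrib, ← Finset.mul_sum, sumT]
  have : (m : ℝ) * (if m = 0 then 1 else 0) = 0 := by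
    cases m with
    | zero => simp
    | succ k => simp
  unfold eSeq
  ring_nf
  rw [mul_comm] at this
  nlinarith [this]

lemma eSeq_val : ∀ m : ℕ, eSeq m = if m = 0 then 1 else if m = 1 then 1 else 0 := by
  intro m
  induction m with
  | zero =>
    unfold eSeq
    simp [PowerSeries.coeff_one]
  | succ k ih =>
    have hrec := eSeq_rec k
    have hk1 : ((k : ℝ) + 1) ≠ 0 := by positivity
    have : eSeq (k + 1) = (1 - k) * eSeq k / (k + 1) := by
      field_simp
      linarith [hrec]
    rw [this, ih]
    match k with
    | 0 => norm_num
    | 1 => norm_num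
    | (n + 2) => push_cast; norm_num

noncomputable def Bc (n : ℕ) : ℝ := ∑ i ∈ Finset.range (n + 1), stirling1 n i / (i + 1)

lemma Bc_div_fact (k : ℕ) : Bc k / k.factorial
    = ∑ i ∈ Finset.range (k + 1), (PowerSeries.coeff (R := ℝ) k) (logSeries ^ i) / (i + 1).factorial := by
  unfold Bc
  rw [Finset.sum_div]
  refine Finset.sum_congr rfl fun i _ => ?_
  rw [coeff_pow_stirling k i]
  have his : (((i + 1).factorial : ℝ)) = (i + 1) * i.factorial := by
    rw [Nat.factorial_succ]; push_cast; ring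
  have hif : ((i.factorial : ℝ)) ≠ 0 := by positivity
  have hkf : ((k.factorial : ℝ)) ≠ 0 := by positivity
  have hi1 : ((i : ℝ) + 1) ≠ 0 := by positivity
  rw [his]
  field_simp

lemma GFB (m : ℕ) :
    ∑ k ∈ Finset.range (m + 1),
        (Bc k / k.factorial) * (PowerSeries.coeff (R := ℝ) (m - k)) logSeries
      = if m = 1 then 1 else 0 := by
  have step1 : ∑ k ∈ Finset.range (m + 1),
      (Bc k / k.factorial) * (PowerSeries.coeff (R := ℝ) (m - k)) logSeries
      = ∑ k ∈ Finset.range (m + 1), ∑ i ∈ Finset.range (m + 1),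
          ((PowerSeries.coeff (R := ℝ) k) (logSeries ^ i) / (i + 1).factorial)
            * (PowerSeries.coeff (R := ℝ) (m - k)) logSeries := by
    refine Finset.sum_congr rfl fun k hk => ?_
    rw [Bc_div_fact, ← Finset.sum_mul]
    congr 1
    refine Finset.sum_subset ?_ ?_
    · exact Finset.range_subset_range.mpr (by simp at hk; omega)
    · intro i _ hi
      rw [coeff_logSeries_pow_eq_zero (by simp at hi ⊢; omega), zero_div]
  rw [step1, Finset.sum_comm]
  have step2 : ∀ i ∈ Finset.range (m + 1),
      ∑ k ∈ Finset.range (m + 1),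
          ((PowerSeries.coeff (R := ℝ) k) (logSeries ^ i) / (i + 1).factorial)
            * (PowerSeries.coeff (R := ℝ) (m - k)) logSeries
        = (PowerSeries.coeff (R := ℝ) m) (logSeries ^ (i + 1)) / (i + 1).factorial := by
    intro i _
    have : (PowerSeries.coeff (R := ℝ) m) (logSeries ^ (i + 1))
        = ∑ k ∈ Finset.range (m + 1),
            (PowerSeries.coeff (R := ℝ) k) (logSeries ^ i)
              * (PowerSeries.coeff (R := ℝ) (m - k)) logSeries := by
      rw [pow_succ, PowerSeries.coeff_mul,
        Finset.Nat.sum_antidiagonal_eq_sum_range_succ_mk]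
    rw [this, Finset.sum_div]
    refine Finset.sum_congr rfl fun k _ => ?_
    ring
  rw [Finset.sum_congr rfl step2, sumT, eSeq_val]
  match m with
  | 0 => norm_num
  | 1 => norm_num
  | (n + 2) => norm_num

lemma b_eq_Bc (b : ℕ → ℝ)
    (hb : PowerSeries.mk (fun n => b n / n.factorial) * logSeries = PowerSeries.X) :
    ∀ n, b n = Bc n := by
  have hcoeff : ∀ m : ℕ, ∑ k ∈ Finset.range (m + 1),
      (b k / k.factorial) * (PowerSeries.coeff (R := ℝ) (m - k)) logSeries
      = if m = 1 then 1 else 0 := by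
    intro m
    have h := congrArg (PowerSeries.coeff (R := ℝ) m) hb
    rw [PowerSeries.coeff_mul, Finset.Nat.sum_antidiagonal_eq_sum_range_succ_mk,
      PowerSeries.coeff_X] at h
    simpa [PowerSeries.coeff_mk] using h
  intro n
  induction n using Nat.strong_induction_on with
  | _ n ih =>
    have h3 : ∑ k ∈ Finset.range (n + 2),
        ((b k - Bc k) / k.factorial) * (PowerSeries.coeff (R := ℝ) (n + 1 - k)) logSeries = 0 := by
      have heq : ∑ k ∈ Finset.range (n + 2),
          ((b k - Bc k) / k.factorial) * (PowerSeries.coeff (R := ℝ) (n + 1 - k)) logSeries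
          = (∑ k ∈ Finset.range (n + 2),
              (b k / k.factorial) * (PowerSeries.coeff (R := ℝ) (n + 1 - k)) logSeries)
            - ∑ k ∈ Finset.range (n + 2),
              (Bc k / k.factorial) * (PowerSeries.coeff (R := ℝ) (n + 1 - k)) logSeries := by
        rw [← Finset.sum_sub_distrib]
        exact Finset.sum_congr rfl fun k _ => by ring
      rw [heq, hcoeff (n + 1), GFB (n + 1), sub_self]
    rw [Finset.sum_range_succ, Finset.sum_range_succ] at h3
    have hz : ∑ k ∈ Finset.range n,
        ((b k - Bc k) / k.factorial) * (PowerSeries.coeff (R := ℝ) (n + 1 - k)) logSeries = 0 := by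
      refine Finset.sum_eq_zero fun k hk => ?_
      rw [ih k (Finset.mem_range.mp hk)]
      simp
    have hlast : ((b (n + 1) - Bc (n + 1)) / (n + 1).factorial)
        * (PowerSeries.coeff (R := ℝ) (n + 1 - (n + 1))) logSeries = 0 := by
      rw [Nat.sub_self, coeff_logSeries]
      simp
    rw [hz, hlast, zero_add, add_zero] at h3
    have hc1 : (PowerSeries.coeff (R := ℝ) (n + 1 - n)) logSeries = 1 := by
      rw [show n + 1 - n = 1 from by omega, coeff_logSeries]
      norm_num
    rw [hc1, mul_one, div_eq_zero_iff] at h3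
    have hnf : ((n.factorial : ℝ)) ≠ 0 := by positivity
    rcases h3 with h | h
    · linarith [h]
    · exact absurd h hnf

lemma integral_poly_eval (p : Polynomial ℝ) (N : ℕ) (hdeg : p.natDegree < N) :
    ∫ x in (0:ℝ)..1, p.eval x = ∑ i ∈ Finset.range N, p.coeff i / (i + 1) := by
  have : ∀ x : ℝ, p.eval x = ∑ i ∈ Finset.range N, p.coeff i * x ^ i := fun x =>
    Polynomial.eval_eq_sum_range' hdeg x
  rw [intervalIntegral.integral_congr (g := fun x => ∑ i ∈ Finset.range N, p.coeff i * x ^ i)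
    (fun x _ => this x)]
  rw [intervalIntegral.integral_finset_sum]
  · refine Finset.sum_congr rfl fun i _ => ?_
    rw [intervalIntegral.integral_const_mul, integral_pow]
    norm_num
    rw [div_eq_mul_inv]
  · intro i _
    exact (Continuous.intervalIntegrable (by continuity) 0 1)

lemma integral_poly_eval_neg (p : Polynomial ℝ) (N : ℕ) (hdeg : p.natDegree < N) :
    ∫ x in (0:ℝ)..1, p.eval (-x)
      = ∑ i ∈ Finset.range N, ((-1 : ℝ) ^ i / (i + 1)) * p.coeff i := by
  have : ∀ x : ℝ, p.eval (-x) = ∑ i ∈ Finset.range N, p.coeff i * ((-1) ^ i * x ^ i) := by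
    intro x
    rw [Polynomial.eval_eq_sum_range' hdeg (-x)]
    refine Finset.sum_congr rfl fun i _ => ?_
    rw [neg_pow]
  rw [intervalIntegral.integral_congr
    (g := fun x => ∑ i ∈ Finset.range N, p.coeff i * ((-1) ^ i * x ^ i)) (fun x _ => this x)]
  rw [intervalIntegral.integral_finset_sum]
  · refine Finset.sum_congr rfl fun i _ => ?_
    rw [show (fun x : ℝ => p.coeff i * ((-1) ^ i * x ^ i))
        = fun x : ℝ => (p.coeff i * (-1) ^ i) * x ^ i from by funext x; ring]
    rw [intervalIntegral.integral_const_mul, integral_pow]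
    norm_num
    try ring
  · intro i _
    exact (Continuous.intervalIntegrable (by continuity) 0 1)

lemma Bc_eq_rhs (m : ℕ) :
    Bc (m + 1) = ∑ i ∈ Finset.range (m + 2),
      ((-1 : ℝ) ^ i / ((i : ℝ) + 1)) * (stirling1 (m + 1) i + (m + 1) * stirling1 m i) := by
  set Q : Polynomial ℝ := descPochhammer ℝ m * (Polynomial.X + 1) with hQ
  have hQcoeff : ∀ i : ℕ, Q.coeff i = stirling1 (m + 1) i + (m + 1) * stirling1 m i := by
    intro i
    have h1 : descPochhammer ℝ (m + 1)
        = descPochhammer ℝ m * Polynomial.X - descPochhammer ℝ m * Polynomial.C (m : ℝ) := by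
      rw [descPochhammer_succ_right, mul_sub]
      simp [Polynomial.C_eq_natCast]
    unfold stirling1
    rw [h1, hQ, mul_add, mul_one, Polynomial.coeff_add, Polynomial.coeff_sub,
      Polynomial.coeff_mul_C]
    push_cast
    ring
  have hQdeg : Q.natDegree < m + 2 := by
    apply lt_of_le_of_lt (Polynomial.natDegree_mul_le)
    have h1 : (Polynomial.X + 1 : Polynomial ℝ).natDegree = 1 := by
      simpa using Polynomial.natDegree_X_add_C (1 : ℝ)
    have h2 : (descPochhammer ℝ m).natDegree = m := descPochhammer_natDegree (R := ℝ) m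
    omega
  have hPdeg : (descPochhammer ℝ (m + 1)).natDegree < m + 2 := by
    rw [descPochhammer_natDegree (R := ℝ)]; omega
  have heval : ∀ x : ℝ, Q.eval (-x) = (descPochhammer ℝ (m + 1)).eval (1 - x) := by
    intro x
    rw [descPochhammer_succ_left, hQ]
    simp [Polynomial.eval_comp]
    ring
  have hint1 : ∫ x in (0:ℝ)..1, Q.eval (-x)
      = ∫ x in (0:ℝ)..1, (descPochhammer ℝ (m + 1)).eval x := by
    rw [intervalIntegral.integral_congr
      (g := fun x => (descPochhammer ℝ (m + 1)).eval (1 - x)) (fun x _ => heval x)]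
    have := intervalIntegral.integral_comp_sub_left
      (a := (0:ℝ)) (b := 1) (fun x => (descPochhammer ℝ (m + 1)).eval x) 1
    simpa using this
  have lhs_eq : Bc (m + 1) = ∫ x in (0:ℝ)..1, (descPochhammer ℝ (m + 1)).eval x := by
    rw [integral_poly_eval _ _ hPdeg]
    rfl
  have rhs_eq : (∑ i ∈ Finset.range (m + 2),
      ((-1 : ℝ) ^ i / ((i : ℝ) + 1)) * (stirling1 (m + 1) i + (m + 1) * stirling1 m i))
      = ∫ x in (0:ℝ)..1, Q.eval (-x) := by
    rw [integral_poly_eval_neg _ _ hQdeg]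
    refine Finset.sum_congr rfl fun i _ => ?_
    rw [hQcoeff i]
  rw [lhs_eq, rhs_eq, hint1]

/-- The Bernoulli numbers of the second kind `b_n`, defined by
`t/log(1+t) = Σ_{n≥0} b_n t^n/n!`, satisfy for `n ≥ 1`:
`b_n = Σ_{i=0}^n ((-1)^i/(i+1)) (S_1(n,i) + n S_1(n-1,i))`. -/
theorem stmt18 (b : ℕ → ℝ)
    (hb : PowerSeries.mk (fun n => b n / n.factorial) * logSeries = PowerSeries.X) :
    ∀ n : ℕ, 1 ≤ n →
      b n = ∑ i ∈ Finset.range (n + 1),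
        ((-1 : ℝ) ^ i / ((i : ℝ) + 1)) * (stirling1 n i + n * stirling1 (n - 1) i) := by
  intro n hn
  obtain ⟨m, rfl⟩ : ∃ m, n = m + 1 := ⟨n - 1, (Nat.succ_pred_eq_of_pos hn).symm⟩
  rw [b_eq_Bc b hb (m + 1), Bc_eq_rhs m]
  refine Finset.sum_congr rfl fun i _ => ?_
  rw [Nat.add_sub_cancel]
  push_cast
  ring
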